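/- arXiv:1304.2084 — 2 statements merged into one kernel-verified Lean document; each statement's English description precedes it below -/
import Mathlib

section
/- Let N ≥ 2 and let {Q₁, Q₂} be a basis of the ℤ/Nℤ-module ℤ/Nℤ ⊕ ℤ/Nℤ. Then there exist an integer k with gcd(k, N) = 1 and a matrix A = [[a,b],[c,d]] ∈ SL₂(ℤ) such that for every τ in the complex upper half plane, Λ(τ; Q₁, Q₂) = Λ_k((aτ+b)/(cτ+d)). -/
open Complex

/-- The Weierstrass ℘-function of the lattice `L_τ = ℤ + ℤτ`. -/
noncomputable def wp (τ z : ℂ) : ℂ :=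
  1 / z ^ 2 +
    ∑' p : {p : ℤ × ℤ // p ≠ 0},
      (1 / (z - ((p.1.1 : ℂ) + (p.1.2 : ℂ) * τ)) ^ 2 -
        1 / ((p.1.1 : ℂ) + (p.1.2 : ℂ) * τ) ^ 2)

/-- `E(τ; r, s) = (2πi)⁻² ℘((rτ+s)/N; L_τ) − 1/12`. -/
noncomputable def Efun (N : ℕ) (r s : ℤ) (τ : ℂ) : ℂ :=
  (2 * (Real.pi : ℂ) * Complex.I) ^ (-2 : ℤ) *
    wp τ (((r : ℂ) * τ + (s : ℂ)) / (N : ℂ)) - 1 / 12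

/-- `ζ = exp(2πi/N)`. -/
noncomputable def zetaN (N : ℕ) : ℂ := Complex.exp (2 * (Real.pi : ℂ) * Complex.I / (N : ℂ))

/-- `q = exp(2πiτ/N)`. -/
noncomputable def qN (N : ℕ) (τ : ℂ) : ℂ :=
  Complex.exp (2 * (Real.pi : ℂ) * Complex.I * τ / (N : ℂ))

/-- `{x}`: the unique integer with `0 ≤ {x} ≤ N/2` and `x ≡ μ(x){x} (mod N)`. -/
def brace (N : ℕ) (x : ℤ) : ℤ := min (x % (N : ℤ)) ((N : ℤ) - x % (N : ℤ))

/-- The sign `μ(x) ∈ {±1}`, with `μ(x) = 1` when `x ≡ 0, N/2 (mod N)`. -/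
def mu (N : ℕ) (x : ℤ) : ℤ := if x % (N : ℤ) ≤ (N : ℤ) - x % (N : ℤ) then 1 else -1

/-- `ω = ζ^{μ(r)s}`. -/
noncomputable def omegaE (N : ℕ) (r s : ℤ) : ℂ := zetaN N ^ (mu N r * s)

/-- `u = ω q^{{r}}`. -/
noncomputable def uE (N : ℕ) (r s : ℤ) (τ : ℂ) : ℂ := omegaE N r s * qN N τ ^ brace N r

/-- `Λ_k(τ) = (E(τ;1,0) − E(τ;1,k))/(E(τ;0,k) − E(τ;1,k))`. -/
noncomputable def LambdaK (N : ℕ) (k : ℤ) (τ : ℂ) : ℂ :=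
  (Efun N 1 0 τ - Efun N 1 k τ) / (Efun N 0 k τ - Efun N 1 k τ)

/-- `φ_τ(Q) = (rτ+s)/N` for the representative `(r,s)` with `0 ≤ r,s < N`. -/
noncomputable def phiPt (N : ℕ) (τ : ℂ) (Q : ZMod N × ZMod N) : ℂ :=
  ((Q.1.val : ℂ) * τ + (Q.2.val : ℂ)) / (N : ℂ)

/-- The generalized lambda function `Λ(τ; Q₁, Q₂)`. -/
noncomputable def LambdaB (N : ℕ) (Q₁ Q₂ : ZMod N × ZMod N) (τ : ℂ) : ℂ :=
  (wp τ (phiPt N τ Q₁) - wp τ (phiPt N τ (Q₁ + Q₂))) /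
    (wp τ (phiPt N τ Q₂) - wp τ (phiPt N τ (Q₁ + Q₂)))

open Classical in
/-- The constant `C_N`. -/
noncomputable def CN (N : ℕ) : ℕ :=
  if N = 2 then 2 ^ 4
  else if IsPrimePow N then (if N.minFac ≤ 3 then N.minFac ^ 2 else N.minFac)
  else 1

/-- `g₂(τ) = 60 Σ' ω⁻⁴`. -/
noncomputable def g2 (τ : ℂ) : ℂ :=
  60 * ∑' p : {p : ℤ × ℤ // p ≠ 0}, (((p.1.1 : ℂ) + (p.1.2 : ℂ) * τ) ^ 4)⁻¹

/-- `g₃(τ) = 140 Σ' ω⁻⁶`. -/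
noncomputable def g3 (τ : ℂ) : ℂ :=
  140 * ∑' p : {p : ℤ × ℤ // p ≠ 0}, (((p.1.1 : ℂ) + (p.1.2 : ℂ) * τ) ^ 6)⁻¹

/-- The modular invariant `j(τ)`. -/
noncomputable def jInv (τ : ℂ) : ℂ := 1728 * g2 τ ^ 3 / (g2 τ ^ 3 - 27 * g3 τ ^ 2)


/-!
For `A = !![a, b; c, d] ∈ SL(2, ℤ)` and `σ = A • τ` we have `(cτ + d) L_σ = L_τ`, hence
`℘(z; L_σ) = (cτ + d)² ℘((cτ + d) z; L_τ)`, and the `N`-division point `(rσ + s)/N` of `L_σ` goes to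
the division point of `L_τ` with coordinates `(r, s) A`. The factor `(cτ + d)²` cancels in the
cross-ratio `Λ_k`, and by periodicity of `℘` only `(r, s) A mod N` matters. Taking
`k = det(Q₁, Q₂)`, it remains to lift the matrix with rows `Q₁` and `k⁻¹ Q₂` from `SL(2, ℤ/N)` to `SL(2, ℤ)`; the
reduction map is surjective because a unimodular pair mod `N` lifts to a coprime pair of integers.
-/

def PeriodPair.oneTau (τ : ℂ) (hτ : τ.im ≠ 0) : PeriodPair where
  ω₁ := 1
  ω₂ := τ
  indep := by
    refine LinearIndependent.pair_iff.mpr fun s t hst => ?_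
    have ht : t = 0 := by simpa [hτ] using congrArg Complex.im hst
    subst ht
    simpa using hst

lemma wp_eq_weierstrassP {τ : ℂ} (hτ : τ.im ≠ 0) (z : ℂ) :
    wp τ z = (PeriodPair.oneTau τ hτ).weierstrassP z := by
  set L := PeriodPair.oneTau τ hτ
  let f : ℤ × ℤ → ℂ := fun p =>
    1 / (z - ((p.1 : ℂ) + (p.2 : ℂ) * τ)) ^ 2 - 1 / ((p.1 : ℂ) + (p.2 : ℂ) * τ) ^ 2
  have hf : HasSum f (L.weierstrassP z) := by
    have := (L.latticeEquivProd.symm.toEquiv.hasSum_iff).mpr (L.hasSum_weierstrassP z)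
    convert this using 1
    ext p
    simp only [Function.comp_apply, LinearEquiv.coe_toEquiv, L.latticeEquiv_symm_apply]
    simp [f, L, PeriodPair.oneTau]
  have hf0 : f 0 = 1 / z ^ 2 := by simp [f]
  have hcompl : HasSum (fun p : {p : ℤ × ℤ // p ≠ 0} => f p) (L.weierstrassP z - 1 / z ^ 2) :=
    (hasSum_singleton (0 : ℤ × ℤ) f).hasSum_compl_iff.mpr (by rwa [hf0, add_sub_cancel])
  rw [wp, hcompl.tsum_eq, add_sub_cancel]

lemma wp_add_lattice {τ : ℂ} (hτ : τ.im ≠ 0) (z : ℂ) (m n : ℤ) :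
    wp τ (z + (m + n * τ)) = wp τ z := by
  set L := PeriodPair.oneTau τ hτ
  have hl : ((L.latticeEquivProd.symm (m, n) : L.lattice) : ℂ) = m + n * τ := by
    rw [L.latticeEquiv_symm_apply]
    simp [L, PeriodPair.oneTau]
  rw [wp_eq_weierstrassP hτ, wp_eq_weierstrassP hτ, ← hl, L.weierstrassP_add_coe]

lemma wp_eq_mul_wp_of_equiv {σ τ l : ℂ} (hl : l ≠ 0) (e : ℤ × ℤ ≃ ℤ × ℤ) (he0 : e 0 = 0)
    (he : ∀ p : ℤ × ℤ, l * (p.1 + p.2 * σ) = (e p).1 + (e p).2 * τ) (z : ℂ) :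
    wp σ z = l ^ 2 * wp τ (l * z) := by
  have hscale : ∀ w : ℂ, l ^ 2 * (1 / (l * w) ^ 2) = 1 / w ^ 2 := fun w => by
    rw [mul_pow, one_div, mul_inv, ← mul_assoc, mul_inv_cancel₀ (pow_ne_zero 2 hl), one_mul,
      one_div]
  let e' : {p : ℤ × ℤ // p ≠ 0} ≃ {p : ℤ × ℤ // p ≠ 0} :=
    e.subtypeEquiv fun p => (e.injective.ne_iff' he0).symm
  rw [wp, wp, mul_add, hscale, ← tsum_mul_left]
  conv_rhs => rw [← e'.tsum_eq]
  congr 1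
  refine tsum_congr fun p => ?_
  simp only [e', Equiv.subtypeEquiv_apply, ← he]
  rw [← mul_sub, mul_sub, hscale, hscale]

open scoped MatrixGroups

lemma SL2_det_eq_one {R : Type*} [CommRing R] (A : SL(2, R)) :
    A 0 0 * A 1 1 - A 0 1 * A 1 0 = 1 := by
  rw [← Matrix.det_fin_two]
  exact A.det_coe

def sl2LatticeEquiv (A : SL(2, ℤ)) : ℤ × ℤ ≃ ℤ × ℤ where
  toFun p := (p.1 * A 1 1 + p.2 * A 0 1, p.1 * A 1 0 + p.2 * A 0 0)
  invFun q := (q.1 * A 0 0 - q.2 * A 0 1, q.2 * A 1 1 - q.1 * A 1 0)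
  left_inv p := by
    ext
    · linear_combination p.1 * SL2_det_eq_one A
    · linear_combination p.2 * SL2_det_eq_one A
  right_inv q := by
    ext
    · linear_combination q.1 * SL2_det_eq_one A
    · linear_combination q.2 * SL2_det_eq_one A

lemma denom_sl2_ne_zero (A : SL(2, ℤ)) {τ : ℂ} (hτ : τ.im ≠ 0) :
    ((A 1 0 : ℤ) : ℂ) * τ + (A 1 1 : ℤ) ≠ 0 := by
  simpa [UpperHalfPlane.denom] using
    UpperHalfPlane.denom_ne_zero_of_im (Matrix.SpecialLinearGroup.mapGL ℝ A) hτ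

lemma wp_sl2_smul (A : SL(2, ℤ)) {τ : ℂ} (hτ : τ.im ≠ 0) (z : ℂ) :
    wp (((A 0 0 : ℤ) * τ + (A 0 1 : ℤ)) / ((A 1 0 : ℤ) * τ + (A 1 1 : ℤ))) z =
      ((A 1 0 : ℤ) * τ + (A 1 1 : ℤ)) ^ 2 * wp τ (((A 1 0 : ℤ) * τ + (A 1 1 : ℤ)) * z) := by
  refine wp_eq_mul_wp_of_equiv (denom_sl2_ne_zero A hτ) (sl2LatticeEquiv A)
    (by simp [sl2LatticeEquiv]) (fun p => ?_) z
  simp only [sl2LatticeEquiv, Equiv.coe_fn_mk]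
  push_cast
  field_simp [denom_sl2_ne_zero A hτ]
  ring

lemma wp_div_eq_wp_phiPt {N : ℕ} [NeZero N] {τ : ℂ} (hτ : τ.im ≠ 0) {m n : ℤ}
    {Q : ZMod N × ZMod N} (hm : (m : ZMod N) = Q.1) (hn : (n : ZMod N) = Q.2) :
    wp τ ((m * τ + n) / N) = wp τ (phiPt N τ Q) := by
  obtain ⟨i, hi⟩ : (N : ℤ) ∣ m - Q.1.val :=
    (ZMod.intCast_eq_intCast_iff_dvd_sub _ _ _).mp (by simp [hm])
  obtain ⟨j, hj⟩ : (N : ℤ) ∣ n - Q.2.val :=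
    (ZMod.intCast_eq_intCast_iff_dvd_sub _ _ _).mp (by simp [hn])
  have hN : (N : ℂ) ≠ 0 := NeZero.ne _
  have hpt : (m * τ + n) / N = phiPt N τ Q + (j + i * τ) := by
    rw [show (m : ℂ) = Q.1.val + N * i by exact_mod_cast (sub_eq_iff_eq_add'.mp hi),
      show (n : ℂ) = Q.2.val + N * j by exact_mod_cast (sub_eq_iff_eq_add'.mp hj), phiPt]
    field_simp
    ring
  rw [hpt, wp_add_lattice hτ]

lemma Efun_sl2_smul {N : ℕ} [NeZero N] (A : SL(2, ℤ)) {τ : ℂ} (hτ : τ.im ≠ 0) (r s : ℤ)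
    {Q : ZMod N × ZMod N} (h₁ : ((r * A 0 0 + s * A 1 0 : ℤ) : ZMod N) = Q.1)
    (h₂ : ((r * A 0 1 + s * A 1 1 : ℤ) : ZMod N) = Q.2) :
    Efun N r s (((A 0 0 : ℤ) * τ + (A 0 1 : ℤ)) / ((A 1 0 : ℤ) * τ + (A 1 1 : ℤ))) =
      (2 * (Real.pi : ℂ) * Complex.I) ^ (-2 : ℤ) * ((A 1 0 : ℤ) * τ + (A 1 1 : ℤ)) ^ 2 *
        wp τ (phiPt N τ Q) - 1 / 12 := by
  have hpt : ((A 1 0 : ℤ) * τ + (A 1 1 : ℤ)) *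
      ((r * (((A 0 0 : ℤ) * τ + (A 0 1 : ℤ)) / ((A 1 0 : ℤ) * τ + (A 1 1 : ℤ))) + s) / N) =
      ((r * A 0 0 + s * A 1 0 : ℤ) * τ + (r * A 0 1 + s * A 1 1 : ℤ)) / N := by
    push_cast
    field_simp [denom_sl2_ne_zero A hτ]
    ring
  rw [Efun, wp_sl2_smul A hτ, hpt, wp_div_eq_wp_phiPt hτ h₁ h₂]
  ring

lemma not_dvd_val_of_isCoprime {N : ℕ} [NeZero N] {γ δ : ZMod N} (h : IsCoprime γ δ) {p : ℕ}
    (hp : p.Prime) (hpN : p ∣ N) (hγ : p ∣ γ.val) : ¬ p ∣ δ.val := by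
  intro hδ
  have : Fact p.Prime := ⟨hp⟩
  have hmod := h.map (ZMod.castHom hpN (ZMod p))
  simp only [ZMod.castHom_apply, ZMod.cast_eq_val, (ZMod.natCast_eq_zero_iff _ _).mpr hγ,
    (ZMod.natCast_eq_zero_iff _ _).mpr hδ, isCoprime_zero_left] at hmod
  exact not_isUnit_zero hmod

lemma exists_isCoprime_intCast_eq {N : ℕ} [NeZero N] {γ δ : ZMod N} (h : IsCoprime γ δ) :
    ∃ c d : ℤ, IsCoprime c d ∧ (c : ZMod N) = γ ∧ (d : ZMod N) = δ := by
  set c : ℕ := γ.val + N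
  set t : ℕ := ∏ p ∈ c.primeFactors with ¬ p ∣ δ.val, p
  refine ⟨c, (δ.val + N * t : ℕ), Nat.isCoprime_iff_coprime.mpr ?_, by simp [c], by simp⟩
  -- A prime factor of `c` divides exactly one of `δ.val` and `N * t`.
  refine Nat.coprime_of_dvd fun p hp hpc hpd => ?_
  by_cases hpδ : p ∣ δ.val
  · have hpN : ¬ p ∣ N := fun hpN =>
      not_dvd_val_of_isCoprime h hp hpN ((Nat.dvd_add_left hpN).mp hpc) hpδ
    have hpt : ¬ p ∣ t := by
      intro hpt
      obtain ⟨q, hq, hpq⟩ := (Prime.dvd_finsetProd_iff hp.prime _).mp hpt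
      rw [Finset.mem_filter] at hq
      rw [(Nat.prime_dvd_prime_iff_eq hp (Nat.prime_of_mem_primeFactors hq.1)).mp hpq] at hpδ
      exact hq.2 hpδ
    exact (hp.dvd_mul.mp ((Nat.dvd_add_right hpδ).mp hpd)).elim hpN hpt
  · have hpt : p ∣ t := Finset.dvd_prod_of_mem _ <| Finset.mem_filter.mpr
      ⟨Nat.mem_primeFactors.mpr ⟨hp, hpc, by simp [c, NeZero.ne N]⟩, hpδ⟩
    exact hpδ ((Nat.dvd_add_left (dvd_mul_of_dvd_right hpt N)).mp hpd)

lemma SL2_map_intCast_surjective (N : ℕ) [NeZero N] :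
    Function.Surjective (Matrix.SpecialLinearGroup.map (Int.castRingHom (ZMod N)) :
      SL(2, ℤ) → SL(2, ZMod N)) := by
  intro M
  have hM := SL2_det_eq_one M
  have hrow : IsCoprime (M 1 0) (M 1 1) := ⟨-M 0 1, M 0 0, by linear_combination hM⟩
  obtain ⟨c, d, ⟨x, y, hxy⟩, hc, hd⟩ := exists_isCoprime_intCast_eq hrow
  have hxy' : (x : ZMod N) * M 1 0 + y * M 1 1 = 1 := by
    rw [← hc, ← hd]; exact_mod_cast congrArg (Int.cast : ℤ → ZMod N) hxy
  set a : ℤ := (M 0 0).cast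
  set b : ℤ := (M 0 1).cast
  have ha : (a : ZMod N) = M 0 0 := ZMod.intCast_zmod_cast _
  have hb : (b : ZMod N) = M 0 1 := ZMod.intCast_zmod_cast _
  -- `(y, -x)` completes `(c, d)` to some `A₀ ∈ SL(2, ℤ)`, and `M A₀⁻¹ ≡ !![1, t; 0, 1]` mod `N`.
  set t : ℤ := b * y + a * x
  let A : SL(2, ℤ) :=
    ⟨!![y + t * c, -x + t * d; c, d], by rw [Matrix.det_fin_two_of]; linear_combination hxy⟩
  have hA : (A : Matrix (Fin 2) (Fin 2) ℤ) = !![y + t * c, -x + t * d; c, d] := rfl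
  refine ⟨A, ?_⟩
  ext i j
  fin_cases i <;> fin_cases j <;> simp [hA, t, ha, hb, hc, hd]
  · linear_combination (-(y : ZMod N)) * hM + M 0 0 * hxy'
  · linear_combination (x : ZMod N) * hM + M 0 1 * hxy'

/-- Proposition 3.1: `Λ(τ; Q₁, Q₂) = Λ_k ∘ A` for some `k` prime to `N` and
`A ∈ SL₂(ℤ)`. -/
theorem stmt11 (N : ℕ) (hN : 2 ≤ N) (Q₁ Q₂ : ZMod N × ZMod N)
    (hbasis : IsUnit (Q₁.1 * Q₂.2 - Q₁.2 * Q₂.1)) :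
    ∃ k : ℤ, Int.gcd k N = 1 ∧
      ∃ A : Matrix.SpecialLinearGroup (Fin 2) ℤ,
        ∀ τ : ℂ, 0 < τ.im →
          LambdaB N Q₁ Q₂ τ =
            LambdaK N k
              (((A 0 0 : ℤ) * τ + (A 0 1 : ℤ)) / ((A 1 0 : ℤ) * τ + (A 1 1 : ℤ))) := by
  have : NeZero N := ⟨by omega⟩
  obtain ⟨u, hu⟩ := hbasis
  -- `Q₂ = u • (second row of M)`, so `Q₁, Q₂, Q₁ + Q₂` are `(1, 0) M, (0, u) M, (1, u) M`.
  let M : SL(2, ZMod N) := ⟨!![Q₁.1, Q₁.2; ↑u⁻¹ * Q₂.1, ↑u⁻¹ * Q₂.2], by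
    rw [Matrix.det_fin_two_of, ← Units.inv_mul u, hu]; ring⟩
  obtain ⟨A, hA⟩ := SL2_map_intCast_surjective N M
  have hAM : ∀ i j, ((A i j : ℤ) : ZMod N) = M i j := fun i j => by
    rw [← hA]; simp
  refine ⟨(u : ZMod N).val, by
    rw [Int.gcd_natCast_natCast]; exact ZMod.val_coe_unit_coprime u, A, fun τ hτ => ?_⟩
  rw [LambdaK, Efun_sl2_smul A hτ.ne' 1 0 (Q := Q₁) (by simp [hAM, M]) (by simp [hAM, M]),
    Efun_sl2_smul A hτ.ne' 0 _ (Q := Q₂) (by simp [hAM, M]) (by simp [hAM, M]),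
    Efun_sl2_smul A hτ.ne' 1 _ (Q := Q₁ + Q₂) (by simp [hAM, M]) (by simp [hAM, M]),
    sub_sub_sub_cancel_right, sub_sub_sub_cancel_right, ← mul_sub, ← mul_sub,
    mul_div_mul_left _ _ ?_, LambdaB]
  exact mul_ne_zero (zpow_ne_zero _ (by simp [Real.pi_ne_zero]))
    (pow_ne_zero 2 (denom_sl2_ne_zero A hτ.ne'))
end

section
/- Let N > 2 and let k be an integer with gcd(k, N) = 1. Then C_N/(1 − ζ^k)³ lies in ℤ[ζ]. -/
open Complex

/-!
Since `ζ^k` is again a primitive `N`-th root of unity and every primitive root is a power of it,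
`(1 - ζ^k)^φ(N)` divides `Φ_N(1) = ∏ (1 - μ)` (over the primitive roots `μ`) in `ℤ[ζ]`.
Now `Φ_N(1)` is `p` when `N` is a power of `p` and `1` otherwise, so `C_N = Φ_N(1)^m` with
`m φ(N) ≥ 3`.
-/

open Polynomial

theorem exists_CN_eq_eval_one_cyclotomic_pow {N : ℕ} (hN : 2 < N) (R : Type*) [CommRing R] :
    ∃ m : ℕ, 3 ≤ m * N.totient ∧ (CN N : R) = (cyclotomic N R).eval 1 ^ m := by
  have hφ : 2 ≤ N.totient := by
    obtain ⟨c, hc⟩ := Nat.totient_even hN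
    have := Nat.totient_pos.mpr (by omega : 0 < N)
    omega
  by_cases hpow : IsPrimePow N
  · obtain ⟨p, n, hp, hn, rfl⟩ := hpow
    have hp := Nat.prime_iff.mpr hp
    have : Fact p.Prime := ⟨hp⟩
    obtain ⟨n, rfl⟩ : ∃ n', n = n' + 1 := ⟨n - 1, by omega⟩
    have hCN : CN (p ^ (n + 1)) = if p ≤ 3 then p ^ 2 else p := by
      rw [CN, if_neg (by omega), if_pos ⟨p, n + 1, hp.prime, hn, rfl⟩, hp.pow_minFac (by omega)]
    rw [hCN, eval_one_cyclotomic_prime_pow]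
    split_ifs with hp3
    · exact ⟨2, by omega, by simp⟩
    · refine ⟨1, ?_, by simp⟩
      have hp5 : 5 ≤ p := hp.five_le_of_ne_two_of_ne_three (by omega) (by omega)
      rw [one_mul, Nat.totient_prime_pow_succ hp]
      exact (by omega : 3 ≤ p - 1).trans (Nat.le_mul_of_pos_left _ (pow_pos hp.pos n))
  · have hCN : CN N = 1 := by rw [CN, if_neg (by omega), if_neg hpow]
    refine ⟨3, by omega, ?_⟩
    rw [hCN, eval_one_cyclotomic_not_prime_pow, Nat.cast_one, one_pow]
    rintro p hp (_ | n) rfl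
    · simp at hN
    · exact hpow ⟨p, n + 1, hp.prime, n.succ_pos, rfl⟩

namespace IsPrimitiveRoot

variable {R : Type*} [CommRing R] [IsDomain R] {η : R} {N : ℕ}

theorem one_sub_pow_totient_dvd_eval_one_cyclotomic (hη : IsPrimitiveRoot η N) :
    (1 - η) ^ N.totient ∣ (cyclotomic N R).eval 1 := by
  obtain rfl | hN := N.eq_zero_or_pos
  · simp
  have : NeZero N := ⟨hN.ne'⟩
  rw [cyclotomic_eq_prod_X_sub_primitiveRoots hη, eval_prod, ← hη.card_primitiveRoots,
    ← Finset.prod_const]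
  refine Finset.prod_dvd_prod_of_dvd _ _ fun μ hμ => ?_
  obtain ⟨i, -, rfl⟩ :=
    hη.eq_pow_of_pow_eq_one (isPrimitiveRoot_of_mem_primitiveRoots hμ).pow_eq_one
  simpa using one_sub_dvd_one_sub_pow η i

theorem one_sub_pow_three_dvd_CN (hη : IsPrimitiveRoot η N) (hN : 2 < N) :
    (1 - η) ^ 3 ∣ (CN N : R) := by
  obtain ⟨m, hm, hCN⟩ := exists_CN_eq_eval_one_cyclotomic_pow hN R
  rw [hCN]
  calc (1 - η) ^ 3 ∣ (1 - η) ^ (N.totient * m) := pow_dvd_pow _ (by rwa [mul_comm])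
    _ = ((1 - η) ^ N.totient) ^ m := pow_mul _ _ _
    _ ∣ _ := pow_dvd_pow_of_dvd hη.one_sub_pow_totient_dvd_eval_one_cyclotomic m

end IsPrimitiveRoot

theorem Subalgebra.div_mem_of_dvd {R K : Type*} [CommRing R] [Field K] [Algebra R K]
    {S : Subalgebra R K} {a b : S} (h : b ∣ a) : (a : K) / b ∈ S := by
  obtain ⟨c, rfl⟩ := h
  obtain rfl | hb := eq_or_ne b 0
  · simp
  · simp [mul_div_cancel_left₀ _ (Subtype.coe_injective.ne hb)]

/-- `C_N/(1 − ζ^k)³ ∈ ℤ[ζ]` for `N > 2` and `gcd(k, N) = 1`. -/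
theorem stmt16 (N : ℕ) (hN : 2 < N) (k : ℤ) (hk : Int.gcd k N = 1) :
    (CN N : ℂ) / (1 - zetaN N ^ k) ^ 3 ∈ Algebra.adjoin ℤ ({zetaN N} : Set ℂ) := by
  set S := Algebra.adjoin ℤ ({zetaN N} : Set ℂ)
  have : NeZero N := ⟨by omega⟩
  have hζ : IsPrimitiveRoot (zetaN N) N := Complex.isPrimitiveRoot_exp N (NeZero.ne N)
  have hη : IsPrimitiveRoot (zetaN N ^ k) N := hζ.zpow_of_gcd_eq_one k hk
  obtain ⟨i, -, hi⟩ := hζ.eq_pow_of_pow_eq_one hη.pow_eq_one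
  have hηS : zetaN N ^ k ∈ S :=
    hi ▸ Subalgebra.pow_mem _ (Algebra.self_mem_adjoin_singleton ℤ _) i
  have hηS' : IsPrimitiveRoot (⟨_, hηS⟩ : S) N := IsPrimitiveRoot.coe_submonoidClass_iff.mp hη
  simpa using Subalgebra.div_mem_of_dvd (hηS'.one_sub_pow_three_dvd_CN hN)
end
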